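/- If Λ is regularly varying with exponent α ∈ (1,2) and slowly varying part L, then κ(x) ~ (Γ(2−α)/(α−1)) x^{α−1} L(x) as x → ∞; equivalently μ(x) ~ (Γ(2−α)/(α−1)) x^{α} L(x). -/

import Mathlib

/-! Tonelli's theorem, in the form of the layer-cake formula for the measure `p⁻² Λ(dp)` on
`(0, 1]`, gives `μ(x) = ∫₀^∞ F_x(u/x) T(u/x) du` with `F_x(q) = 1 - (1 - q)₊^(x-1)` and
`T(y) = ∫_{(y,1]} p⁻² Λ(dp)`. Divided by `x^α L(x)`, the integrand tends to
`(1 - e^{-u}) u^{-α}` by regular variation. For `β < α < γ`, regular variation also gives the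
doubling bounds `2^β T(1/x) ≤ T(1/(2x)) ≤ 2^γ T(1/x)` for large `x`; iterating them yields a
Potter bound `T(u/x) ≤ C (u^{-β} + u^{-γ}) x^α L(x)`, hence the integrable majorant
`C min(u, 1) (u^{-β} + u^{-γ})` when `1 < β < α < γ < 2`. Dominated convergence and
`∫₀^∞ (1 - e^{-u}) u^{-α} du = Γ(2-α)/(α-1)` (layer cake once more) conclude. -/

open MeasureTheory Real Set Filter Topology

/-- The integrand of `mu`, with its continuous extension `x(x-1)/2` at `p = 0`. -/
noncomputable def muInt (x p : ℝ) : ℝ :=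
  if p = 0 then x * (x - 1) / 2
  else (x * p - 1 + (1 - p) ^ x) / p ^ 2

/-- The rate of decrease `μ(x)` of the `Λ`-coalescent. -/
noncomputable def mu (Λ : Measure ℝ) (x : ℝ) : ℝ :=
  ∫ p in Set.Icc (0:ℝ) 1, muInt x p ∂Λ

/-- The rate of decrease per capita `κ(x) = μ(x)/x`. -/
noncomputable def kappa (Λ : Measure ℝ) (x : ℝ) : ℝ := mu Λ x / x

/-- `T(y) = ∫_{(y,1]} p⁻² Λ(dp)`. -/
noncomputable def T (Λ : Measure ℝ) (y : ℝ) : ℝ :=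
  ∫ p in Set.Ioc y 1, 1 / p ^ 2 ∂Λ

/-- `L` is slowly varying at infinity: it is measurable, positive on `(0,∞)`, and
`L(cx)/L(x) → 1` as `x → ∞` for every `c > 0`. -/
def SlowlyVarying (L : ℝ → ℝ) : Prop :=
  Measurable L ∧ (∀ x : ℝ, 0 < x → 0 < L x) ∧
    ∀ c : ℝ, 0 < c → Tendsto (fun x => L (c * x) / L x) atTop (𝓝 1)

/-- The measure `Λ` is regularly varying with exponent `α` and slowly varying part `L`:
`Λ({0}) = 0` and `∫_{(y,1]} p⁻² Λ(dp) ∼ y^{−α} L(1/y)` as `y ↓ 0`. -/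
def RegularlyVarying (Λ : Measure ℝ) (α : ℝ) (L : ℝ → ℝ) : Prop :=
  Λ {0} = 0 ∧ SlowlyVarying L ∧
    Tendsto (fun y => T Λ y / (y ^ (-α) * L (1 / y))) (𝓝[>] (0:ℝ)) (𝓝 1)

/- On `[0, 1]` this is `1 - (1 - q)^(x-1)`. The base is truncated at `0` so that the kernel is
continuous and equal to `1` on `[1, ∞)` instead of picking up `rpow`'s values at negative
bases. -/
noncomputable def kappaKernel (x q : ℝ) : ℝ := 1 - (max (1 - q) 0) ^ (x - 1)

section Kernel

variable {x p q u : ℝ}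

theorem continuous_kappaKernel (hx : 1 ≤ x) : Continuous (kappaKernel x) :=
  continuous_const.sub <| ((continuous_const.sub continuous_id).max continuous_const).rpow_const
    fun _ => Or.inr (by linarith)

theorem kappaKernel_nonneg (hx : 1 ≤ x) (hq : 0 ≤ q) : 0 ≤ kappaKernel x q :=
  sub_nonneg.2 <| rpow_le_one (le_max_right _ _) (max_le (by linarith) zero_le_one)
    (by linarith)

theorem kappaKernel_le_one : kappaKernel x q ≤ 1 :=
  sub_le_self _ (rpow_nonneg (le_max_right _ _) _)

theorem kappaKernel_le_mul (hx : 2 ≤ x) (hq : 0 ≤ q) : kappaKernel x q ≤ (x - 1) * q := by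
  rcases le_or_gt q 1 with hq1 | hq1
  · have bernoulli := one_add_mul_self_le_rpow_one_add (s := -q) (by linarith) (p := x - 1)
      (by linarith)
    rw [← sub_eq_add_neg] at bernoulli
    rw [kappaKernel, max_eq_left (by linarith : 0 ≤ 1 - q)]
    linarith
  · exact kappaKernel_le_one.trans (by nlinarith)

theorem kappaKernel_div_le_min (hx : 2 ≤ x) (hu : 0 ≤ u) :
    kappaKernel x (u / x) ≤ min u 1 := by
  have hx0 : 0 < x := by linarith
  refine le_min ?_ kappaKernel_le_one
  calc kappaKernel x (u / x) ≤ (x - 1) * (u / x) := kappaKernel_le_mul hx (by positivity)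
    _ ≤ x * (u / x) := by gcongr; linarith
    _ = u := by field_simp

theorem hasDerivAt_kappaKernel_primitive (hx : 1 ≤ x) (hq : q ≤ 1) :
    HasDerivAt (fun q => x * q - 1 + (1 - q) ^ x) (x * kappaKernel x q) q := by
  have hpow : HasDerivAt (fun q : ℝ => (1 - q) ^ x) (x * (1 - q) ^ (x - 1) * -1) q :=
    (Real.hasDerivAt_rpow_const (Or.inr hx)).comp q ((hasDerivAt_id q).const_sub 1)
  refine ((((hasDerivAt_id q).const_mul x).sub_const 1).add hpow).congr_deriv ?_
  rw [kappaKernel, max_eq_left (by linarith)]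
  ring

theorem integral_mul_kappaKernel (hx : 1 ≤ x) (hp : p ≤ 1) :
    ∫ q in (0 : ℝ)..p, x * kappaKernel x q = x * p - 1 + (1 - p) ^ x := by
  rw [intervalIntegral.integral_eq_sub_of_hasDerivAt
    (fun q hq => hasDerivAt_kappaKernel_primitive hx ?_)
    ((continuous_const.mul (continuous_kappaKernel hx)).intervalIntegrable _ _)]
  · simp
  · exact hq.2.trans (max_le zero_le_one hp)

theorem tendsto_kappaKernel_div (u : ℝ) :
    Tendsto (fun x : ℝ => kappaKernel x (u / x)) atTop (𝓝 (1 - exp (-u))) := by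
  have hbase : Tendsto (fun x : ℝ => 1 - u / x) atTop (𝓝 1) := by
    simpa using (tendsto_const_nhds (x := u).div_atTop tendsto_id).const_sub 1
  have hpow := (tendsto_one_add_div_rpow_exp (-u)).div hbase one_ne_zero
  rw [div_one] at hpow
  refine (hpow.const_sub 1).congr' ?_
  filter_upwards [eventually_gt_atTop (max u 0)] with x hx
  have hx0 : 0 < x := (le_max_right _ _).trans_lt hx
  have hb : 0 < 1 - u / x := by
    rw [sub_pos, div_lt_one hx0]; exact (le_max_left _ _).trans_lt hx
  simp only [Pi.div_apply, kappaKernel, max_eq_left hb.le, rpow_sub hb, rpow_one, neg_div,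
    ← sub_eq_add_neg]

end Kernel

section Tail

variable {Λ : Measure ℝ} {y : ℝ}

theorem T_nonneg (Λ : Measure ℝ) (y : ℝ) : 0 ≤ T Λ y :=
  setIntegral_nonneg measurableSet_Ioc fun _ _ => by positivity

theorem T_eq_zero_of_one_le (hy : 1 ≤ y) : T Λ y = 0 := by
  rw [T, Ioc_eq_empty (not_lt.2 hy), Measure.restrict_empty, integral_zero_measure]

theorem integrableOn_one_div_sq [IsFiniteMeasure Λ] (hy : 0 < y) :
    IntegrableOn (fun p => 1 / p ^ 2) (Ioc y 1) Λ := by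
  refine Measure.integrableOn_of_bounded (M := 1 / y ^ 2) (measure_ne_top Λ _)
    (measurable_const.div (measurable_id.pow_const 2)).aestronglyMeasurable ?_
  filter_upwards [ae_restrict_mem measurableSet_Ioc] with p hp
  rw [norm_of_nonneg (by positivity)]
  gcongr
  exact hp.1.le

theorem antitoneOn_T [IsFiniteMeasure Λ] : AntitoneOn (T Λ) (Ioi 0) := fun y hy _ _ hyy' =>
  setIntegral_mono_set (integrableOn_one_div_sq hy)
    (Eventually.of_forall fun _ => by positivity)
    (Ioc_subset_Ioc_left hyy').eventuallyLE

theorem measurable_T [SFinite Λ] : Measurable (T Λ) := by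
  have hjoint : StronglyMeasurable fun z : ℝ × ℝ => {z | z.1 < z.2 ∧ z.2 ≤ 1}.indicator
      (fun z => 1 / z.2 ^ 2) z :=
    (Measurable.indicator (by fun_prop)
      ((measurableSet_lt measurable_fst measurable_snd).inter
        (measurableSet_le measurable_snd measurable_const))).stronglyMeasurable
  convert (hjoint.integral_prod_right' (ν := Λ)).measurable using 2 with y
  rw [T, ← integral_indicator measurableSet_Ioc]
  rfl

end Tail

noncomputable def rateMeasure (Λ : Measure ℝ) : Measure ℝ :=
  (Λ.restrict (Ioc 0 1)).withDensity fun p => ENNReal.ofReal (1 / p ^ 2)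

section LayerCake

variable {Λ : Measure ℝ} {x p y : ℝ}

theorem rateMeasure_Ioi [IsFiniteMeasure Λ] (hy : 0 < y) :
    rateMeasure Λ (Ioi y) = ENNReal.ofReal (T Λ y) := by
  rw [rateMeasure, withDensity_apply _ measurableSet_Ioi,
    Measure.restrict_restrict measurableSet_Ioi, inter_comm, Ioc_inter_Ioi, max_eq_right hy.le, T,
    ofReal_integral_eq_lintegral_ofReal
      (integrableOn_one_div_sq hy) (Eventually.of_forall fun _ => by positivity)]

theorem muInt_eq_integral (hx : 1 ≤ x) (hp : p ∈ Ioc 0 1) :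
    muInt x p = (∫ q in (0 : ℝ)..p, x * kappaKernel x q) / p ^ 2 := by
  rw [muInt, if_neg hp.1.ne', integral_mul_kappaKernel hx hp.2]

theorem measurable_muInt (x : ℝ) : Measurable (muInt x) :=
  Measurable.ite (measurableSet_singleton 0) measurable_const (by fun_prop)

theorem mu_eq_integral [IsFiniteMeasure Λ] (h0 : Λ {0} = 0) (hx : 1 ≤ x) :
    mu Λ x = ∫ q in Ioi 0, x * kappaKernel x q * T Λ q := by
  have hkernel : Continuous fun q => x * kappaKernel x q :=
    continuous_const.mul (continuous_kappaKernel hx)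
  have hlayer := lintegral_comp_eq_lintegral_meas_lt_mul (rateMeasure Λ) (f := id)
    ((withDensity_absolutelyContinuous _ _).ae_le (ae_restrict_of_forall_mem measurableSet_Ioc
      fun p hp => hp.1.le))
    aemeasurable_id
    (fun _ _ => hkernel.intervalIntegrable _ _)
    (ae_restrict_of_forall_mem measurableSet_Ioi fun q hq =>
      mul_nonneg (by linarith) (kappaKernel_nonneg hx (le_of_lt hq)))
  rw [mu, setIntegral_congr_set (Ioc_ae_eq_Icc' h0).symm,
    integral_eq_lintegral_of_nonneg_ae, integral_eq_lintegral_of_nonneg_ae]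
  · congr 1
    calc ∫⁻ p in Ioc 0 1, ENNReal.ofReal (muInt x p) ∂Λ
        = ∫⁻ p, ENNReal.ofReal (∫ q in (0 : ℝ)..p, x * kappaKernel x q)
            ∂rateMeasure Λ := by
          rw [rateMeasure, lintegral_withDensity_eq_lintegral_mul₀ (by fun_prop)
            (intervalIntegral.continuous_primitive (fun _ _ => hkernel.intervalIntegrable _ _)
              0).measurable.ennreal_ofReal.aemeasurable]
          refine setLIntegral_congr_fun measurableSet_Ioc fun p hp => ?_
          rw [Pi.mul_apply, ← ENNReal.ofReal_mul (by positivity), muInt_eq_integral hx hp,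
            div_eq_mul_one_div, mul_comm]
      _ = ∫⁻ q in Ioi 0, rateMeasure Λ (Ioi q) * ENNReal.ofReal (x * kappaKernel x q) := hlayer
      _ = ∫⁻ q in Ioi 0, ENNReal.ofReal (x * kappaKernel x q * T Λ q) := by
          refine setLIntegral_congr_fun measurableSet_Ioi fun q hq => ?_
          rw [rateMeasure_Ioi hq, ← ENNReal.ofReal_mul (T_nonneg Λ q), mul_comm]
  · exact ae_restrict_of_forall_mem measurableSet_Ioi fun q hq => mul_nonneg (mul_nonneg
      (by linarith) (kappaKernel_nonneg hx (le_of_lt hq))) (T_nonneg Λ q)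
  · exact (hkernel.measurable.mul measurable_T).aestronglyMeasurable
  · exact ae_restrict_of_forall_mem measurableSet_Ioc fun p hp => by
      rw [muInt_eq_integral hx hp]
      exact div_nonneg (intervalIntegral.integral_nonneg hp.1.le fun q hq =>
        mul_nonneg (by linarith) (kappaKernel_nonneg hx hq.1)) (by positivity)
  · exact (measurable_muInt x).aestronglyMeasurable

theorem mu_eq_integral_comp_div [IsFiniteMeasure Λ] (h0 : Λ {0} = 0) (hx : 1 ≤ x) :
    mu Λ x = ∫ u in Ioi 0, kappaKernel x (u / x) * T Λ (u / x) := by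
  have hsubst := integral_comp_mul_left_Ioi (fun q => kappaKernel x q * T Λ q) 0
    (inv_pos.2 (zero_lt_one.trans_le hx))
  simp only [mul_zero, inv_inv, smul_eq_mul] at hsubst
  simp_rw [mu_eq_integral h0 hx, mul_assoc, integral_const_mul, div_eq_inv_mul, hsubst]

end LayerCake

theorem integral_one_sub_exp_mul_rpow {α : ℝ} (hα1 : 1 < α) (hα2 : α < 2) :
    ∫ u in Ioi 0, (1 - exp (-u)) * u ^ (-α) = Gamma (2 - α) / (α - 1) := by
  set ν := (volume.restrict (Ioi (0 : ℝ))).withDensity fun u => ENNReal.ofReal (u ^ (-α))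
  have hν : ∀ t : ℝ, 0 < t → ν (Ioi t) = ENNReal.ofReal (t ^ (1 - α) / (α - 1)) := by
    intro t ht
    rw [withDensity_apply _ measurableSet_Ioi, Measure.restrict_restrict measurableSet_Ioi,
      Ioi_inter_Ioi, max_eq_left ht.le, ← ofReal_integral_eq_lintegral_ofReal
        (integrableOn_Ioi_rpow_of_lt (by linarith) ht)
        (ae_restrict_of_forall_mem measurableSet_Ioi fun u hu => by
          have : 0 < u := ht.trans hu; positivity),
      integral_Ioi_rpow_of_lt (by linarith) ht]
    congr 1
    rw [show -α + 1 = -(α - 1) by ring, show 1 - α = -(α - 1) by ring, div_neg, neg_div,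
      neg_neg]
  have hprim : ∀ u : ℝ, ∫ t in (0 : ℝ)..u, exp (-t) = 1 - exp (-u) := fun u => by
    simp [intervalIntegral.integral_comp_neg (fun t => exp t)]
  have hlayer := lintegral_comp_eq_lintegral_meas_lt_mul ν (f := id)
    ((withDensity_absolutelyContinuous _ _).ae_le (ae_restrict_of_forall_mem measurableSet_Ioi
      fun u hu => le_of_lt hu))
    aemeasurable_id (fun _ _ => (continuous_exp.comp continuous_neg).intervalIntegrable _ _)
    (Eventually.of_forall fun t => (exp_pos _).le)
  have hexp_le : ∀ u : ℝ, 0 ≤ u → 0 ≤ 1 - exp (-u) := fun u hu =>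
    sub_nonneg.2 (exp_le_one_iff.2 (by linarith))
  rw [Gamma_eq_integral (by linarith), ← integral_div, integral_eq_lintegral_of_nonneg_ae,
    integral_eq_lintegral_of_nonneg_ae]
  · congr 1
    calc ∫⁻ u in Ioi 0, ENNReal.ofReal ((1 - exp (-u)) * u ^ (-α))
        = ∫⁻ u, ENNReal.ofReal (∫ t in (0 : ℝ)..u, exp (-t)) ∂ν := by
          rw [lintegral_withDensity_eq_lintegral_mul₀ (by fun_prop) (by fun_prop)]
          refine setLIntegral_congr_fun measurableSet_Ioi fun u hu => ?_
          rw [Pi.mul_apply, hprim, ← ENNReal.ofReal_mul (rpow_nonneg (le_of_lt hu) _), mul_comm]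
      _ = ∫⁻ t in Ioi 0, ν (Ioi t) * ENNReal.ofReal (exp (-t)) := hlayer
      _ = ∫⁻ t in Ioi 0, ENNReal.ofReal (exp (-t) * t ^ (2 - α - 1) / (α - 1)) := by
          refine setLIntegral_congr_fun measurableSet_Ioi fun t ht => ?_
          rw [hν t ht, show 2 - α - 1 = 1 - α by ring,
            ← ENNReal.ofReal_mul (div_nonneg (rpow_nonneg (le_of_lt ht) _) (by linarith))]
          ring_nf
  · exact ae_restrict_of_forall_mem measurableSet_Ioi fun t ht =>
      div_nonneg (by have : 0 < t := ht; positivity) (by linarith)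
  · exact Measurable.aestronglyMeasurable (by fun_prop)
  · exact ae_restrict_of_forall_mem measurableSet_Ioi fun u hu =>
      mul_nonneg (hexp_le u (le_of_lt hu)) (by have : 0 < u := hu; positivity)
  · exact Measurable.aestronglyMeasurable (by fun_prop)

section Doubling

variable {f : ℝ → ℝ} {X β γ x y u : ℝ}

theorem le_mul_rpow_of_doubling_le (hX : 0 < X) (hmono : MonotoneOn f (Ioi 0))
    (hf : ∀ x, 0 ≤ f x) (hγ : 0 ≤ γ) (hdbl : ∀ x, X ≤ x → f (2 * x) ≤ 2 ^ γ * f x)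
    (hx : X ≤ x) (hxy : x ≤ y) : f y ≤ 2 ^ γ * (y / x) ^ γ * f x := by
  obtain ⟨n, hn⟩ := pow_unbounded_of_one_lt (y / x) one_lt_two
  rw [div_lt_iff₀ (hX.trans_le hx)] at hn
  induction n generalizing x with
  | zero => exact absurd hxy (by simpa using hn)
  | succ n ih =>
    have hx0 : 0 < x := hX.trans_le hx
    have hyx : 0 ≤ y / (2 * x) := div_nonneg (hx0.le.trans hxy) (by positivity)
    rcases lt_or_ge y (2 * x) with hy | hy
    · calc f y ≤ f (2 * x) := hmono (hx0.trans_le hxy) (mul_pos two_pos hx0) hy.le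
        _ ≤ 2 ^ γ * f x := hdbl x hx
        _ ≤ 2 ^ γ * (y / x) ^ γ * f x := by
          rw [mul_assoc]
          gcongr
          exact le_mul_of_one_le_left (hf x) (one_le_rpow ((one_le_div hx0).2 hxy) hγ)
    · calc f y ≤ 2 ^ γ * (y / (2 * x)) ^ γ * f (2 * x) :=
            ih (by linarith) hy (by rwa [pow_succ, mul_assoc] at hn)
        _ ≤ 2 ^ γ * (y / (2 * x)) ^ γ * (2 ^ γ * f x) :=
          mul_le_mul_of_nonneg_left (hdbl x hx) (by have := rpow_nonneg hyx γ; positivity)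
        _ = 2 ^ γ * (y / (2 * x) * 2) ^ γ * f x := by rw [mul_rpow hyx zero_le_two]; ring
        _ = 2 ^ γ * (y / x) ^ γ * f x := by
          rw [div_mul_eq_mul_div, mul_comm y, mul_div_mul_left _ _ two_ne_zero]

theorem mul_rpow_le_of_le_doubling (hX : 0 < X) (hmono : MonotoneOn f (Ioi 0))
    (hf : ∀ x, 0 ≤ f x) (hβ : 0 ≤ β) (hdbl : ∀ x, X ≤ x → 2 ^ β * f x ≤ f (2 * x))
    (hx : X ≤ x) (hxy : x ≤ y) : (y / (2 * x)) ^ β * f x ≤ f y := by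
  obtain ⟨n, hn⟩ := pow_unbounded_of_one_lt (y / x) one_lt_two
  rw [div_lt_iff₀ (hX.trans_le hx)] at hn
  induction n generalizing x with
  | zero => exact absurd hxy (by simpa using hn)
  | succ n ih =>
    have hx0 : 0 < x := hX.trans_le hx
    have hyx : 0 ≤ y / (2 * (2 * x)) := div_nonneg (hx0.le.trans hxy) (by positivity)
    rcases lt_or_ge y (2 * x) with hy | hy
    · calc (y / (2 * x)) ^ β * f x ≤ f x :=
            mul_le_of_le_one_left (hf x) (rpow_le_one (div_nonneg (hx0.le.trans hxy)
              (by positivity)) ((div_le_one (by positivity)).2 (by linarith)) hβ)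
        _ ≤ f y := hmono hx0 (hx0.trans_le hxy) hxy
    · calc (y / (2 * x)) ^ β * f x = (y / (2 * (2 * x))) ^ β * (2 ^ β * f x) := by
            rw [← mul_assoc, ← mul_rpow hyx zero_le_two]
            congr 2
            field_simp
        _ ≤ (y / (2 * (2 * x))) ^ β * f (2 * x) :=
          mul_le_mul_of_nonneg_left (hdbl x hx) (rpow_nonneg hyx β)
        _ ≤ f y := ih (by linarith) hy (by rwa [pow_succ, mul_assoc] at hn)

theorem potter_bound_of_doubling (hX : 1 ≤ X) (hmono : MonotoneOn f (Ioi 0))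
    (hf : ∀ x, 0 ≤ f x) (hβ : 0 ≤ β) (hγ : 0 ≤ γ) (hlow : ∀ x, X ≤ x → 2 ^ β * f x ≤ f (2 * x))
    (hup : ∀ x, X ≤ x → f (2 * x) ≤ 2 ^ γ * f x) (hx : X ≤ x) (hu : 0 < u) (hux : u ≤ x) :
    f (x / u) ≤ (2 ^ γ + (2 * X) ^ β) * (u ^ (-β) + u ^ (-γ)) * f x := by
  have hX0 : 0 < X := one_pos.trans_le hX
  have hx0 : 0 < x := hX0.trans_le hx
  have hC : 0 ≤ (2 * X) ^ β := by positivity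
  have huβ : 0 ≤ u ^ (-β) := rpow_nonneg hu.le _
  have huγ : 0 ≤ u ^ (-γ) := rpow_nonneg hu.le _
  rcases le_or_gt u 1 with hu1 | hu1
  · have hxu : x / u / x = u⁻¹ := by field_simp
    calc f (x / u) ≤ 2 ^ γ * (x / u / x) ^ γ * f x :=
          le_mul_rpow_of_doubling_le hX0 hmono hf hγ hup hx
            ((le_div_iff₀ hu).2 (mul_le_of_le_one_right hx0.le hu1))
      _ = 2 ^ γ * u ^ (-γ) * f x := by rw [hxu, inv_rpow hu.le, rpow_neg hu.le]
      _ ≤ (2 ^ γ + (2 * X) ^ β) * (u ^ (-β) + u ^ (-γ)) * f x :=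
          mul_le_mul_of_nonneg_right (mul_le_mul (le_add_of_nonneg_right hC)
            (le_add_of_nonneg_left huβ) huγ (by positivity)) (hf x)
  · set t := max (x / u) X
    have ht0 : 0 < t := hX0.trans_le (le_max_right _ _)
    have htx : t ≤ x := max_le (div_le_self hx0.le hu1.le) hx
    have hratio : 2 * t / x ≤ 2 * X / u := by
      rw [div_le_div_iff₀ hx0 hu, mul_assoc, max_mul_of_nonneg _ _ hu.le,
        div_mul_cancel₀ _ hu.ne', mul_assoc 2 X]
      gcongr
      exact max_le (le_mul_of_one_le_left hx0.le hX) (mul_le_mul_of_nonneg_left hux hX0.le)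
    calc f (x / u) ≤ f t := hmono (div_pos hx0 hu) ht0 (le_max_left _ _)
      _ = (2 * t / x) ^ β * ((x / (2 * t)) ^ β * f t) := by
          rw [← mul_assoc, ← mul_rpow (by positivity) (by positivity),
            show 2 * t / x * (x / (2 * t)) = 1 by field_simp, one_rpow, one_mul]
      _ ≤ (2 * X / u) ^ β * f x :=
          mul_le_mul (rpow_le_rpow (by positivity) hratio hβ)
            (mul_rpow_le_of_le_doubling hX0 hmono hf hβ hlow (le_max_right _ _) htx)
            (mul_nonneg (by positivity) (hf t)) (by positivity)
      _ = (2 * X) ^ β * u ^ (-β) * f x := by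
          rw [div_rpow (by positivity) hu.le, rpow_neg hu.le]; ring
      _ ≤ (2 ^ γ + (2 * X) ^ β) * (u ^ (-β) + u ^ (-γ)) * f x :=
          mul_le_mul_of_nonneg_right (mul_le_mul (le_add_of_nonneg_left (by positivity))
            (le_add_of_nonneg_right huγ) huβ (by positivity)) (hf x)

end Doubling

section RegularVariation

variable {Λ : Measure ℝ} {α β γ : ℝ} {L : ℝ → ℝ}

theorem RegularlyVarying.tendsto_T_div (hreg : RegularlyVarying Λ α L) {u : ℝ} (hu : 0 < u) :
    Tendsto (fun x => T Λ (u / x) / (x ^ α * L x)) atTop (𝓝 (u ^ (-α))) := by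
  obtain ⟨-, hL, htail⟩ := hreg
  have hy : Tendsto (fun x : ℝ => u / x) atTop (𝓝[>] 0) :=
    tendsto_nhdsWithin_iff.2 ⟨tendsto_const_nhds.div_atTop tendsto_id,
      (eventually_gt_atTop 0).mono fun x hx => div_pos hu hx⟩
  have hL' := (hL.2.2 u⁻¹ (inv_pos.2 hu)).const_mul (u ^ (-α))
  rw [mul_one] at hL'
  rw [← one_mul (u ^ (-α))]
  refine ((htail.comp hy).mul hL').congr' ?_
  filter_upwards [eventually_gt_atTop 0] with x hx
  have hLx := hL.2.1 x hx
  have hLxu := hL.2.1 (x / u) (by positivity)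
  rw [Function.comp_apply, one_div_div, div_rpow hu.le hx.le, rpow_neg hx.le]
  field_simp

theorem RegularlyVarying.eventually_doubling (hreg : RegularlyVarying Λ α L) (hβα : β < α)
    (hαγ : α < γ) : ∀ᶠ x in atTop, 2 ^ β * T Λ (1 / x) ≤ T Λ (1 / (2 * x)) ∧
      T Λ (1 / (2 * x)) ≤ 2 ^ γ * T Λ (1 / x) ∧ T Λ (1 / x) ≤ 2 * (x ^ α * L x) := by
  have h1 := hreg.tendsto_T_div one_pos
  have h2 := hreg.tendsto_T_div (u := 2⁻¹) (by norm_num)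
  rw [one_rpow] at h1
  rw [inv_rpow zero_le_two, rpow_neg zero_le_two, inv_inv] at h2
  have hratio := (h2.div h1 one_ne_zero).eventually (Ioo_mem_nhds
    (by rw [div_one]; exact rpow_lt_rpow_of_exponent_lt one_lt_two hβα)
    (by rw [div_one]; exact rpow_lt_rpow_of_exponent_lt one_lt_two hαγ))
  filter_upwards [hratio, h1.eventually (Ioo_mem_nhds zero_lt_one one_lt_two),
    eventually_gt_atTop 0] with x ⟨hlow, hup⟩ ⟨hpos, hle⟩ hx
  have hD : 0 < x ^ α * L x := mul_pos (rpow_pos_of_pos hx α) (hreg.2.1.2.1 x hx)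
  have hT : 0 < T Λ (1 / x) := by simpa [hD] using hpos
  simp only [Pi.div_apply] at hlow hup
  rw [div_div_div_cancel_right₀ hD.ne', show 2⁻¹ / x = 1 / (2 * x) by ring] at hlow hup
  refine ⟨(lt_div_iff₀ hT).1 hlow |>.le, (div_lt_iff₀ hT).1 hup |>.le, ?_⟩
  exact ((div_lt_iff₀ hD).1 hle).le

theorem RegularlyVarying.exists_T_div_le [IsFiniteMeasure Λ] (hreg : RegularlyVarying Λ α L)
    (hβ : 0 ≤ β) (hβα : β < α) (hαγ : α < γ) :
    ∃ C X : ℝ, 0 ≤ C ∧ ∀ x, X ≤ x → ∀ u, 0 < u → u ≤ x →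
      T Λ (u / x) ≤ C * (u ^ (-β) + u ^ (-γ)) * (x ^ α * L x) := by
  obtain ⟨X, hX⟩ := eventually_atTop.1 (hreg.eventually_doubling hβα hαγ)
  have hmono : MonotoneOn (fun y => T Λ (1 / y)) (Ioi 0) := fun a ha b hb hab =>
    antitoneOn_T (mem_Ioi.2 (one_div_pos.2 hb)) (mem_Ioi.2 (one_div_pos.2 ha))
      (one_div_le_one_div_of_le ha hab)
  refine ⟨(2 ^ γ + (2 * max X 1) ^ β) * 2, max X 1, by positivity, fun x hx u hu hux => ?_⟩
  have hXx : X ≤ x := (le_max_left _ _).trans hx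
  have hpotter := potter_bound_of_doubling (f := fun y => T Λ (1 / y)) (le_max_right X 1) hmono
    (fun y => T_nonneg Λ _) hβ (hβ.trans (hβα.trans hαγ).le)
    (fun y hy => (hX y ((le_max_left _ _).trans hy)).1)
    (fun y hy => (hX y ((le_max_left _ _).trans hy)).2.1) hx hu hux
  rw [one_div_div] at hpotter
  calc T Λ (u / x) ≤ (2 ^ γ + (2 * max X 1) ^ β) * (u ^ (-β) + u ^ (-γ)) * T Λ (1 / x) :=
        hpotter
    _ ≤ (2 ^ γ + (2 * max X 1) ^ β) * (u ^ (-β) + u ^ (-γ)) * (2 * (x ^ α * L x)) := by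
        gcongr
        exact (hX x hXx).2.2
    _ = _ := by ring

end RegularVariation

theorem integrableOn_min_one_mul_rpow {r : ℝ} (h1 : 1 < r) (h2 : r < 2) :
    IntegrableOn (fun u : ℝ => min u 1 * u ^ (-r)) (Ioi 0) := by
  rw [← Ioc_union_Ioi_eq_Ioi zero_le_one]
  refine IntegrableOn.union ?_ ?_
  · refine ((intervalIntegrable_iff_integrableOn_Ioc_of_le zero_le_one).1
      (intervalIntegral.intervalIntegrable_rpow' (r := 1 - r) (by linarith))).congr_fun
      (fun u hu => ?_) measurableSet_Ioc
    dsimp only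
    rw [min_eq_left hu.2, sub_eq_add_neg, rpow_add hu.1, rpow_one]
  · exact (integrableOn_Ioi_rpow_of_lt (a := -r) (by linarith) one_pos).congr_fun
      (fun u hu => by rw [min_eq_right (le_of_lt hu), one_mul]) measurableSet_Ioi

section Limit

variable {Λ : Measure ℝ} {α β γ x u : ℝ} {L : ℝ → ℝ}

theorem kappaKernel_mul_T_div_le {C D : ℝ} (hC : 0 ≤ C) (hx : 2 ≤ x) (hu : 0 < u)
    (hT : u ≤ x → T Λ (u / x) ≤ C * (u ^ (-β) + u ^ (-γ)) * D) (hD : 0 < D) :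
    kappaKernel x (u / x) * T Λ (u / x) / D ≤
      C * (min u 1 * u ^ (-β) + min u 1 * u ^ (-γ)) := by
  have hx0 : 0 < x := two_pos.trans_le hx
  have huβ := rpow_nonneg hu.le (-β)
  have huγ := rpow_nonneg hu.le (-γ)
  have hmin : 0 ≤ min u 1 := le_min hu.le zero_le_one
  rw [div_le_iff₀ hD]
  rcases le_or_gt u x with hux | hxu
  · calc kappaKernel x (u / x) * T Λ (u / x)
        ≤ min u 1 * (C * (u ^ (-β) + u ^ (-γ)) * D) :=
          mul_le_mul (kappaKernel_div_le_min hx hu.le) (hT hux) (T_nonneg Λ _) hmin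
      _ = _ := by ring
  · rw [T_eq_zero_of_one_le ((one_le_div hx0).2 hxu.le), mul_zero]
    positivity

theorem RegularlyVarying.tendsto_mu_div [IsFiniteMeasure Λ] (hreg : RegularlyVarying Λ α L)
    (hα1 : 1 < α) (hα2 : α < 2) :
    Tendsto (fun x => mu Λ x / (x ^ α * L x)) atTop (𝓝 (Gamma (2 - α) / (α - 1))) := by
  set β := (1 + α) / 2 with hβ
  set γ := (2 + α) / 2 with hγ
  obtain ⟨C, X, hC, hT⟩ :=
    hreg.exists_T_div_le (β := β) (γ := γ) (by positivity) (by linarith) (by linarith)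
  have hrep : ∀ᶠ x in atTop,
      ∫ u in Ioi 0, kappaKernel x (u / x) * T Λ (u / x) / (x ^ α * L x) =
        mu Λ x / (x ^ α * L x) := by
    filter_upwards [eventually_ge_atTop 1] with x hx
    rw [mu_eq_integral_comp_div hreg.1 hx, integral_div]
  rw [← integral_one_sub_exp_mul_rpow hα1 hα2]
  refine (tendsto_integral_filter_of_dominated_convergence
    (fun u => C * (min u 1 * u ^ (-β) + min u 1 * u ^ (-γ))) ?_ ?_ ?_ ?_).congr' hrep
  · filter_upwards [eventually_ge_atTop 1] with x hx
    exact ((((continuous_kappaKernel hx).measurable.comp (measurable_id.div_const x)).mul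
      (measurable_T.comp (measurable_id.div_const x))).div_const _).aestronglyMeasurable
  · filter_upwards [eventually_ge_atTop (max X 2)] with x hx
    refine ae_restrict_of_forall_mem measurableSet_Ioi fun u (hu : 0 < u) => ?_
    have hx2 : 2 ≤ x := (le_max_right _ _).trans hx
    have hx0 : 0 < x := two_pos.trans_le hx2
    have hD : 0 < x ^ α * L x := mul_pos (rpow_pos_of_pos hx0 _) (hreg.2.1.2.1 x hx0)
    rw [norm_of_nonneg (div_nonneg (mul_nonneg (kappaKernel_nonneg (by linarith)
      (div_pos hu hx0).le) (T_nonneg Λ _)) hD.le)]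
    exact kappaKernel_mul_T_div_le hC hx2 hu (hT x ((le_max_left _ _).trans hx) u hu) hD
  · exact ((integrableOn_min_one_mul_rpow (by linarith) (by linarith)).add
      (integrableOn_min_one_mul_rpow (by linarith) (by linarith))).const_mul C
  · refine ae_restrict_of_forall_mem measurableSet_Ioi fun u (hu : 0 < u) => ?_
    simp_rw [mul_div_assoc]
    exact (tendsto_kappaKernel_div u).mul (hreg.tendsto_T_div hu)

end Limit

theorem kappa_asymp_regVarying_general (Λ : Measure ℝ) [IsFiniteMeasure Λ] (α : ℝ) (hα1 : 1 < α)
    (hα2 : α < 2) (L : ℝ → ℝ) (hreg : RegularlyVarying Λ α L) :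
    Tendsto (fun x => kappa Λ x / (Real.Gamma (2 - α) / (α - 1) * x ^ (α - 1) * L x))
      atTop (𝓝 1) ∧
    Tendsto (fun x => mu Λ x / (Real.Gamma (2 - α) / (α - 1) * x ^ α * L x))
      atTop (𝓝 1) := by
  have hc : Gamma (2 - α) / (α - 1) ≠ 0 :=
    (div_pos (Gamma_pos_of_pos (by linarith)) (by linarith)).ne'
  have hmu := (hreg.tendsto_mu_div hα1 hα2).div_const (Gamma (2 - α) / (α - 1))
  rw [div_self hc] at hmu
  replace hmu : Tendsto (fun x => mu Λ x / (Gamma (2 - α) / (α - 1) * x ^ α * L x)) atTop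
      (𝓝 1) := hmu.congr fun x => by rw [div_div, mul_comm (x ^ α * L x), mul_assoc]
  refine ⟨hmu.congr' ?_, hmu⟩
  filter_upwards [eventually_gt_atTop 0] with x hx
  rw [kappa, div_div, rpow_sub_one hx.ne']
  field_simp

/-- If `Λ` is regularly varying with exponent `α ∈ (1,2)` and slowly varying part `L`,
then `κ(x) ∼ (Γ(2−α)/(α−1)) x^{α−1} L(x)`, equivalently
`μ(x) ∼ (Γ(2−α)/(α−1)) x^{α} L(x)`, as `x → ∞`. -/
theorem kappa_asymp_regVarying (Λ : Measure ℝ) [IsFiniteMeasure Λ] (hΛ : Λ ≠ 0)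
    (hsupp : Λ (Set.Icc (0:ℝ) 1)ᶜ = 0) (α : ℝ) (hα1 : 1 < α) (hα2 : α < 2)
    (L : ℝ → ℝ) (hreg : RegularlyVarying Λ α L) :
    Tendsto (fun x => kappa Λ x / (Real.Gamma (2 - α) / (α - 1) * x ^ (α - 1) * L x))
      atTop (𝓝 1) ∧
    Tendsto (fun x => mu Λ x / (Real.Gamma (2 - α) / (α - 1) * x ^ α * L x))
      atTop (𝓝 1) :=
  kappa_asymp_regVarying_general Λ α hα1 hα2 L hreg
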